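/- Fix the first k rows of a random ±1 matrix and suppose there are at least εnN/(2K) sets A' ∈ binom([n],k+1), each having at least one λ-heavy parent in binom([n],k). Then after exposing a random (k+1)-th row of iid ±1 signs, with probability at least 1/3, at least εnN/(8K) of these A' are λ-heavy. -/

import Mathlib

open MeasureTheory

/-- The uniform probability measure on `{-1,+1}^n` sign patterns: this models a random row of
`n` iid uniform `±1` signs. -/
noncomputable def rowMeasure (n : ℕ) : Measure (Fin n → Bool) :=
  (PMF.uniformOfFintype (Fin n → Bool)).toMeasure

/-- The `±1` sign associated to a boolean. -/
def sgn (b : Bool) : ℝ := if b then 1 else -1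

/-- `permOn M A` is the permanent of the square minor of the `m × n` matrix `M` on the columns
in `A` (and all `m` rows), when `A` has exactly `m` elements (and `0` otherwise). -/
noncomputable def permOn {m n : ℕ} (M : Matrix (Fin m) (Fin n) ℝ) (A : Finset (Fin n)) : ℝ :=
  if h : A.card = m then (Matrix.of fun r c => M r ((A.orderIsoOfFin h c : Fin n))).permanent
  else 0

/-- `extendRow M r` appends the row `r` at the bottom of the `k × n` matrix `M`. -/
def extendRow {k n : ℕ} (M : Matrix (Fin k) (Fin n) ℝ) (r : Fin n → ℝ) :
    Matrix (Fin (k + 1)) (Fin n) ℝ :=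
  Matrix.of fun p c => if h : (p : ℕ) < k then M ⟨p, h⟩ c else r c

/-!
Let `B` have a heavy parent `B.erase i`. The permanent of the minor on `B` is affine in the new
row, and its coefficient at the entry in column `i` is the permanent of the parent. Flipping the
sign in column `i` therefore moves the permanent by `2 |permOn M (B.erase i)| ≥ 2λ`, so of each
pair `{b, flip b}` of rows at least one makes `B` heavy: every `B ∈ S` is heavy for at least half
of the rows. The number `X` of heavy members of `S` then has mean `≥ |S|/2` and never exceeds
`|S|`, which forces `X ≥ |S|/4` with probability at least `1/3`.
-/

open Finset

namespace Matrix

theorem submatrix_id_updateRow {m n o α : Type*} [DecidableEq m] (A : Matrix m n α) (i : m)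
    (r : n → α) (f : o → n) :
    (A.updateRow i r).submatrix id f = (A.submatrix id f).updateRow i (r ∘ f) := by
  ext p c
  simp [updateRow_apply]

variable {n R : Type*} [DecidableEq n] [Fintype n] [CommSemiring R]

theorem permanent_updateCol_add (A : Matrix n n R) (j : n) (u v : n → R) :
    (A.updateCol j (u + v)).permanent =
      (A.updateCol j u).permanent + (A.updateCol j v).permanent := by
  simp only [permanent, ← mul_prod_erase _ _ (mem_univ j), updateCol_self, Pi.add_apply, add_mul,
    sum_add_distrib]
  congr 1 <;> refine sum_congr rfl fun σ _ => congrArg _ (prod_congr rfl fun i hi => ?_) <;>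
    simp only [updateCol_ne (ne_of_mem_erase hi)]

theorem permanent_updateRow_add (A : Matrix n n R) (j : n) (u v : n → R) :
    (A.updateRow j (u + v)).permanent =
      (A.updateRow j u).permanent + (A.updateRow j v).permanent := by
  rw [← permanent_transpose, ← updateCol_transpose, permanent_updateCol_add,
    updateCol_transpose, updateCol_transpose, permanent_transpose, permanent_transpose]

theorem permanent_eq_of_row_zero_eq_single {k : ℕ} (A : Matrix (Fin (k + 1)) (Fin (k + 1)) R)
    (h : A 0 = Pi.single 0 1) : A.permanent = (A.submatrix Fin.succ Fin.succ).permanent := by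
  rw [← permanent_transpose A, ← permanent_transpose (A.submatrix _ _), permanent,
    univ_perm_fin_succ, ← univ_product_univ, sum_map, sum_product, Fin.sum_univ_succ]
  simp [Fin.prod_univ_succ, h, permanent]

theorem permanent_eq_of_row_eq_single {k : ℕ} (A : Matrix (Fin (k + 1)) (Fin (k + 1)) R)
    (i j : Fin (k + 1)) (h : A i = Pi.single j 1) :
    A.permanent = (A.submatrix i.succAbove j.succAbove).permanent := by
  have hA : ((A.submatrix i.cycleRange.symm id).submatrix id j.cycleRange.symm).permanent =
      A.permanent := by
    rw [permanent_permute_rows, permanent_permute_cols]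
  rw [← hA, permanent_eq_of_row_zero_eq_single]
  · simp [submatrix_submatrix, Function.comp_def]
  · ext b
    simp [h, Pi.single_apply, Equiv.symm_apply_eq]

end Matrix

section PermOn

variable {m n : ℕ}

theorem permOn_eq_permanent_submatrix (A : Matrix (Fin m) (Fin n) ℝ) {B : Finset (Fin n)}
    (hB : B.card = m) : permOn A B = (A.submatrix id (B.orderEmbOfFin hB)).permanent := by
  simp only [permOn, dif_pos hB, coe_orderIsoOfFin_apply]
  rfl

theorem permOn_updateRow_add (A : Matrix (Fin m) (Fin n) ℝ) (j : Fin m) (u v : Fin n → ℝ)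
    (B : Finset (Fin n)) :
    permOn (A.updateRow j (u + v)) B = permOn (A.updateRow j u) B + permOn (A.updateRow j v) B := by
  by_cases hB : B.card = m
  · simp only [permOn_eq_permanent_submatrix _ hB, Matrix.submatrix_id_updateRow]
    exact Matrix.permanent_updateRow_add _ _ _ _
  · simp [permOn, hB]

theorem permOn_updateRow_smul (A : Matrix (Fin m) (Fin n) ℝ) (j : Fin m) (t : ℝ)
    (u : Fin n → ℝ) (B : Finset (Fin n)) :
    permOn (A.updateRow j (t • u)) B = t * permOn (A.updateRow j u) B := by
  by_cases hB : B.card = m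
  · simp only [permOn_eq_permanent_submatrix _ hB, Matrix.submatrix_id_updateRow]
    exact Matrix.permanent_updateRow_smul _ _ _ _
  · simp [permOn, hB]

theorem permOn_updateRow_sub (A : Matrix (Fin m) (Fin n) ℝ) (j : Fin m) {u v : Fin n → ℝ}
    {i : Fin n} (huv : ∀ c ≠ i, u c = v c) (B : Finset (Fin n)) :
    permOn (A.updateRow j u) B - permOn (A.updateRow j v) B =
      (u i - v i) * permOn (A.updateRow j (Pi.single i 1)) B := by
  have hu : u = v + (u i - v i) • Pi.single i 1 := by
    ext c
    by_cases hc : c = i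
    · subst hc; simp
    · simp [huv c hc, hc]
  conv_lhs => rw [hu, permOn_updateRow_add, permOn_updateRow_smul]
  ring

end PermOn

section ExtendRow

variable {k n : ℕ} (M : Matrix (Fin k) (Fin n) ℝ)

theorem extendRow_eq_updateRow (r : Fin n → ℝ) :
    extendRow M r = (extendRow M 0).updateRow (Fin.last k) r := by
  ext p c
  by_cases hp : p = Fin.last k
  · subst hp; simp [extendRow]
  · simp [extendRow, Matrix.updateRow_ne hp, Fin.val_lt_last hp]

theorem permOn_extendRow_single {B : Finset (Fin n)} (hB : B.card = k + 1) {i : Fin n}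
    (hi : i ∈ B) : permOn (extendRow M (Pi.single i 1)) B = permOn M (B.erase i) := by
  set e := B.orderEmbOfFin hB
  obtain ⟨c₀, hc₀⟩ : ∃ c₀, e c₀ = i := by
    simpa [e, ← Set.mem_range, range_orderEmbOfFin] using hi
  have hB' : (B.erase i).card = k := by simp [card_erase_of_mem hi, hB]
  have he : (fun x => e (c₀.succAbove x)) = (B.erase i).orderEmbOfFin hB' := by
    refine orderEmbOfFin_unique hB' (fun x => mem_erase.mpr ⟨?_, orderEmbOfFin_mem B hB _⟩)
      (e.strictMono.comp (Fin.strictMono_succAbove c₀))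
    rw [← hc₀]
    exact e.injective.ne (Fin.succAbove_ne c₀ x)
  have hrow : (extendRow M (Pi.single i 1)).submatrix id e (Fin.last k) = Pi.single c₀ 1 := by
    ext c
    simp [extendRow, Pi.single_apply, ← hc₀, e.injective.eq_iff]
  rw [permOn_eq_permanent_submatrix _ hB, permOn_eq_permanent_submatrix _ hB',
    Matrix.permanent_eq_of_row_eq_single _ _ _ hrow, ← he]
  congr 1
  ext a x
  simp [extendRow]

end ExtendRow

section Counting

variable {Ω : Type*} [Fintype Ω]

theorem card_le_two_mul_card_filter_of_injective (p : Ω → Prop) [DecidablePred p] {g : Ω → Ω}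
    (hg : Function.Injective g) (h : ∀ ω, p ω ∨ p (g ω)) :
    Fintype.card Ω ≤ 2 * #{ω | p ω} := by
  have hle : #{ω | ¬ p ω} ≤ #{ω | p ω} :=
    card_le_card_of_injOn g (fun ω hω => by
      simp only [coe_filter, mem_univ, true_and, Set.mem_ofPred_eq] at hω ⊢
      exact (h ω).resolve_left hω) hg.injOn
  have hsplit := card_filter_add_card_filter_not (s := univ) fun ω => p ω
  rw [card_univ] at hsplit
  omega

/-- Reverse Markov inequality, in counting form. -/
theorem card_le_three_mul_card_filter_quarter_le (X : Ω → ℝ) {s : ℝ}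
    (hX0 : ∀ ω, 0 ≤ X ω) (hXs : ∀ ω, X ω ≤ s)
    (hmean : s * Fintype.card Ω ≤ 2 * ∑ ω, X ω) :
    Fintype.card Ω ≤ 3 * #{ω | s / 4 ≤ X ω} := by
  rcases le_or_gt s 0 with hs | hs
  · rw [filter_true_of_mem fun ω _ => by linarith [hX0 ω], card_univ]
    omega
  have hsum := (sum_filter_add_sum_filter_not univ (fun ω => s / 4 ≤ X ω) X).symm
  have hbig : ∑ ω ∈ {ω | s / 4 ≤ X ω}, X ω ≤ #{ω | s / 4 ≤ X ω} * s := by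
    simpa using sum_le_card_nsmul _ X s fun ω _ => hXs ω
  have hsmall :
      ∑ ω ∈ {ω | ¬ s / 4 ≤ X ω}, X ω ≤ #{ω | ¬ s / 4 ≤ X ω} * (s / 4) := by
    simpa using sum_le_card_nsmul _ X (s / 4) fun ω hω => (not_le.mp (mem_filter.mp hω).2).le
  have hcard : (#{ω | s / 4 ≤ X ω} : ℝ) + #{ω | ¬ s / 4 ≤ X ω} = Fintype.card Ω := by
    exact_mod_cast card_filter_add_card_filter_not (s := univ) (fun ω => s / 4 ≤ X ω)
  have : s * Fintype.card Ω ≤ s * (3 * #{ω | s / 4 ≤ X ω}) := by nlinarith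
  exact_mod_cast le_of_mul_le_mul_left this hs

theorem card_le_three_mul_card_filter_many {ι : Type*} (S : Finset ι) (R : ι → Ω → Prop)
    [DecidableRel R] (h : ∀ A ∈ S, Fintype.card Ω ≤ 2 * #{ω | R A ω}) :
    Fintype.card Ω ≤ 3 * #{ω | (#S : ℝ) / 4 ≤ #{A ∈ S | R A ω}} := by
  refine card_le_three_mul_card_filter_quarter_le _ (fun ω => Nat.cast_nonneg _)
    (fun ω => mod_cast card_filter_le _ _) ?_
  have hswap : ∑ ω, #{A ∈ S | R A ω} = ∑ A ∈ S, #{ω | R A ω} := by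
    simp only [card_filter]
    exact sum_comm
  have : #S * Fintype.card Ω ≤ 2 * ∑ ω, #{A ∈ S | R A ω} := by
    rw [hswap, mul_sum, ← smul_eq_mul, ← sum_const]
    exact sum_le_sum h
  exact_mod_cast this

end Counting

theorem rowMeasure_setOf {n : ℕ} (p : (Fin n → Bool) → Prop) [DecidablePred p] :
    rowMeasure n {b | p b} = #{b | p b} / (2 : ENNReal) ^ n := by
  rw [rowMeasure,
    PMF.toMeasure_uniformOfFintype_apply (s := {b | p b}) (Set.toFinite _).measurableSet]
  simp [Fintype.card_subtype]

theorem one_div_three_le_rowMeasure {n : ℕ} (p : (Fin n → Bool) → Prop) [DecidablePred p]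
    (h : Fintype.card (Fin n → Bool) ≤ 3 * #{b | p b}) : 1 / 3 ≤ rowMeasure n {b | p b} := by
  rw [Fintype.card_fun, Fintype.card_bool, Fintype.card_fin] at h
  rw [rowMeasure_setOf, ENNReal.le_div_iff_mul_le (by simp) (by simp), one_div,
    ← ENNReal.div_eq_inv_mul, ENNReal.div_le_iff (by simp) (by simp), mul_comm]
  exact_mod_cast h

section Flip

variable {k n : ℕ} (M : Matrix (Fin k) (Fin n) ℝ) {lam : ℝ} {B : Finset (Fin n)} {i : Fin n}

theorem heavy_or_heavy_flip (hB : B.card = k + 1) (hi : i ∈ B)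
    (hheavy : lam ≤ |permOn M (B.erase i)|) (b : Fin n → Bool) :
    lam ≤ |permOn (extendRow M fun j => sgn (b j)) B| ∨
      lam ≤ |permOn (extendRow M fun j => sgn (Function.update b i (!b i) j)) B| := by
  have hdiff := permOn_updateRow_sub (extendRow M 0) (Fin.last k) (i := i)
    (u := fun j => sgn (b j)) (v := fun j => sgn (Function.update b i (!b i) j))
    (fun c hc => by simp [Function.update_of_ne hc]) B
  rw [← extendRow_eq_updateRow, ← extendRow_eq_updateRow, ← extendRow_eq_updateRow,
    permOn_extendRow_single M hB hi, Function.update_self] at hdiff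
  have hjump : |sgn (b i) - sgn (!b i)| = 2 := by cases b i <;> norm_num [sgn]
  have hgap : 2 * lam ≤ |permOn (extendRow M fun j => sgn (b j)) B -
      permOn (extendRow M fun j => sgn (Function.update b i (!b i) j)) B| := by
    rw [hdiff, abs_mul, hjump]
    linarith
  by_contra! h
  linarith [abs_sub (permOn (extendRow M fun j => sgn (b j)) B)
    (permOn (extendRow M fun j => sgn (Function.update b i (!b i) j)) B)]

theorem card_le_two_mul_card_heavy (hB : B.card = k + 1) (hi : i ∈ B)
    (hheavy : lam ≤ |permOn M (B.erase i)|) :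
    Fintype.card (Fin n → Bool) ≤
      2 * #{b : Fin n → Bool | lam ≤ |permOn (extendRow M fun j => sgn (b j)) B|} := by
  have hflip : Function.Involutive fun b : Fin n → Bool => Function.update b i (!b i) := by
    intro b
    ext j
    by_cases hj : j = i
    · subst hj; simp
    · simp [Function.update_of_ne hj]
  exact card_le_two_mul_card_filter_of_injective _ hflip.injective
    (heavy_or_heavy_flip M hB hi hheavy)

end Flip

open Classical in
theorem grow_number_of_heavy_minors_general
    (k n : ℕ) (ε N K lam : ℝ)
    (M : Matrix (Fin k) (Fin n) ℝ)
    (S : Finset (Finset (Fin n)))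
    (hS : ∀ A' ∈ S, A'.card = k + 1 ∧
      ∃ i ∈ A', lam ≤ |permOn M (A'.erase i)|)
    (hScard : ε * n * N / (2 * K) ≤ (S.card : ℝ)) :
    (1 / 3 : ENNReal) ≤
      rowMeasure n
        {b | ε * n * N / (8 * K) ≤
          ((S.filter fun A' =>
            lam ≤ |permOn (extendRow M fun j => sgn (b j)) A'|).card : ℝ)} := by
  have hmany := card_le_three_mul_card_filter_many S
    (fun A' (b : Fin n → Bool) => lam ≤ |permOn (extendRow M fun j => sgn (b j)) A'|)
    fun A' hA' => by
      obtain ⟨hcard, i, hi, hheavy⟩ := hS A' hA'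
      exact card_le_two_mul_card_heavy M hcard hi hheavy
  have hthreshold : ε * n * N / (8 * K) ≤ (S.card : ℝ) / 4 := by
    rw [show 8 * K = 2 * K * 4 by ring, ← div_div]
    linarith
  calc (1 / 3 : ENNReal)
      ≤ rowMeasure n {b | (S.card : ℝ) / 4 ≤
          #{A' ∈ S | lam ≤ |permOn (extendRow M fun j => sgn (b j)) A'|}} :=
        one_div_three_le_rowMeasure _ hmany
    _ ≤ _ := measure_mono fun b hb => hthreshold.trans hb

open Classical in
/-- Growing the number of heavy minors: fix the first `k` rows `M` (with `±1` entries) and a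
family `S` of `(k+1)`-element column sets, each having at least one `λ`-heavy parent, with
`|S| ≥ ε n N / (2K)`. Then after exposing a random `(k+1)`-th row of iid uniform signs, with
probability at least `1/3`, at least `ε n N / (8K)` of the members of `S` are `λ`-heavy. -/
theorem grow_number_of_heavy_minors
    (k n : ℕ) (ε N K lam : ℝ) (hε : 0 < ε) (hN : 1 ≤ N) (hK : 0 < K) (hlam : 0 < lam)
    (M : Matrix (Fin k) (Fin n) ℝ) (hM : ∀ p c, M p c = 1 ∨ M p c = -1)
    (S : Finset (Finset (Fin n)))
    (hS : ∀ A' ∈ S, A'.card = k + 1 ∧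
      ∃ i ∈ A', lam ≤ |permOn M (A'.erase i)|)
    (hScard : ε * n * N / (2 * K) ≤ (S.card : ℝ)) :
    (1 / 3 : ENNReal) ≤
      rowMeasure n
        {b | ε * n * N / (8 * K) ≤
          ((S.filter fun A' =>
            lam ≤ |permOn (extendRow M fun j => sgn (b j)) A'|).card : ℝ)} :=
  grow_number_of_heavy_minors_general k n ε N K lam M S hS hScard
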